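/- The optimum of the MTR scheduling problem is at most the optimum of the restricted (simultaneous-transmission) problem: let G be a finite simple graph with finite vertex set V, let T : V → V → ℕ be a traffic demand, and for each node i let t i := max over j of T i j. Suppose S⁽¹⁾, …, S⁽ᴸ⁾ are independent sets of G with airtimes x₁, …, x_L ∈ ℕ such that for every node i, the sum over l of xₗ · (1 if i ∈ S⁽ˡ⁾ else 0) is at least t i. Then the schedule consisting of the transmit matrices M⁽ˡ⁾ i j := (i ∈ S⁽ˡ⁾ and i adjacent to j), with the same airtimes x₁, …, x_L, is a schedule of matching matrices that meets T, and it has the same total length x₁ + … + x_L. -/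

import Mathlib

/-- `M` is a matching matrix for the graph `G`: active links join adjacent
nodes, and no node simultaneously transmits and receives. -/
def IsMatchingMatrix {V : Type*} (G : SimpleGraph V) (M : V → V → Prop) : Prop :=
  (∀ i j, M i j → G.Adj i j) ∧ (∀ i j k, M i j → ¬ M k i)

/-- `S` is an independent set of `G`: no two of its vertices are adjacent. -/
def IsIndepSet {V : Type*} (G : SimpleGraph V) (S : Set V) : Prop :=
  ∀ i ∈ S, ∀ j ∈ S, ¬ G.Adj i j

theorem IsIndepSet.isMatchingMatrix_transmit {V : Type*} {G : SimpleGraph V} {S : Set V}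
    (hS : IsIndepSet G S) : IsMatchingMatrix G (fun i j => i ∈ S ∧ G.Adj i j) :=
  ⟨fun _ _ h => h.2, fun i _ k hi hk => hS k hk.1 i hi.1 hk.2⟩

open Classical in
/-- The optimum of the MTR scheduling problem is at most the optimum of the
restricted (simultaneous-transmission) problem: if independent sets
`S l` with airtimes `x l` cover the per-node demands `t i = max_j T i j`,
then the transmit matrices `M l i j := i ∈ S l ∧ G.Adj i j`, with the same
airtimes (hence the same total length), form a schedule of matching matrices
that meets `T`. -/
theorem indepSet_schedule_dominates {V : Type*} [Fintype V]
    (G : SimpleGraph V) (T : V → V → ℕ) (hT : ∀ i j, ¬ G.Adj i j → T i j = 0)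
    (L : ℕ) (S : Fin L → Set V) (x : Fin L → ℕ)
    (hS : ∀ l, IsIndepSet G (S l))
    (hcover : ∀ i, Finset.univ.sup (fun j => T i j) ≤
      ∑ l, x l * (if i ∈ S l then 1 else 0)) :
    (∀ l, IsMatchingMatrix G (fun i j => i ∈ S l ∧ G.Adj i j)) ∧
      ∀ i j, T i j ≤ ∑ l, x l * (if i ∈ S l ∧ G.Adj i j then 1 else 0) := by
  refine ⟨fun l => (hS l).isMatchingMatrix_transmit, fun i j => ?_⟩
  by_cases hadj : G.Adj i j
  · calc T i j ≤ Finset.univ.sup (fun j => T i j) := Finset.le_sup (Finset.mem_univ j)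
      _ ≤ ∑ l, x l * (if i ∈ S l then 1 else 0) := hcover i
      _ = ∑ l, x l * (if i ∈ S l ∧ G.Adj i j then 1 else 0) := by simp only [hadj, and_true]
  · simp [hT i j hadj]
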